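/- arXiv:math/0702508 — 6 statements merged into one kernel-verified Lean document; each statement's English description precedes it below -/
import Mathlib

section
/- If I ⊆ S is a monomial ideal of strong Borel type, then I is of Borel type; that is, for every index 1 ≤ j ≤ n one has (I : x_j^∞) = (I : (x_1,…,x_j)^∞), where for an ideal T ⊆ S, (I : T^∞) denotes the union over k ≥ 1 of the colon ideals (I : T^k). -/
open MvPolynomial

/-- A monomial ideal of `K[x_1,…,x_n]`: an ideal generated by monomials. -/
def IsMonomialIdeal {n : ℕ} {K : Type*} [Field K]
    (I : Ideal (MvPolynomial (Fin n) K)) : Prop :=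
  ∃ A : Set (Fin n →₀ ℕ),
    I = Ideal.span ((fun m => (monomial m (1 : K) : MvPolynomial (Fin n) K)) '' A)

/-- A monomial ideal `I` is of strong Borel type (SBT) if for every monomial `u ∈ I`
(with exponent vector `m`) and all indices `j < i` there is `0 ≤ t ≤ ν_i(u)` with
`x_j^t · u / x_i^{ν_i(u)} ∈ I`. -/
def IsSBT {n : ℕ} {K : Type*} [Field K]
    (I : Ideal (MvPolynomial (Fin n) K)) : Prop :=
  IsMonomialIdeal I ∧
    ∀ m : Fin n →₀ ℕ, (monomial m (1 : K) : MvPolynomial (Fin n) K) ∈ I →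
      ∀ j i : Fin n, j < i →
        ∃ t : ℕ, t ≤ m i ∧
          (monomial (Finsupp.update m i 0 + Finsupp.single j t) (1 : K) :
            MvPolynomial (Fin n) K) ∈ I

/-- `(I : T^∞) = ⋃_{k ≥ 1} (I : T^k)`. -/
noncomputable def satIdeal {n : ℕ} {K : Type*} [Field K]
    (I T : Ideal (MvPolynomial (Fin n) K)) : Ideal (MvPolynomial (Fin n) K) :=
  ⨆ k ∈ {k : ℕ | 1 ≤ k}, Submodule.colon I (((T ^ k : Ideal (MvPolynomial (Fin n) K))) : Set (MvPolynomial (Fin n) K))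

/-! Over a Noetherian ring, `f ∈ (I : T^∞)` exactly when `T ⊆ √(I : f)`, so both saturations are
described by which variables lie in `√(I : f)`, and it suffices to show that `x_j ∈ √(I : f)` forces
`x_i ∈ √(I : f)` for `i < j`. Since `I` is monomial, `x_j^k f ∈ I` gives `u x_j^k ∈ I` for every
monomial `u` of `f`; the strong Borel property replaces the whole `x_j`-part of `u x_j^k` by a power
of `x_i`, so `u x_i^t ∈ I`, and `√(I : f)` contains the intersection of the `√(I : u)`. -/

namespace Ideal

variable {R : Type*} [CommSemiring R]

lemma mem_radical_colon_of_forall_mem {I : Ideal R} {s : Finset R} {g : R}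
    (h : ∀ x ∈ s, g ∈ (I.colon {x}).radical) : g ∈ (I.colon (s : Set R)).radical := by
  classical
  induction s using Finset.induction_on with
  | empty => simp [Submodule.colon_empty, radical_top]
  | insert a s _ ih =>
    rw [Finset.coe_insert, Set.insert_eq, Submodule.colon_union, radical_inf]
    exact ⟨h a (Finset.mem_insert_self a s), ih fun x hx => h x (Finset.mem_insert_of_mem hx)⟩

end Ideal

namespace MvPolynomial

variable {σ R : Type*} [CommSemiring R]

lemma monomial_one_mem_of_le {I : Ideal (MvPolynomial σ R)} {a b : σ →₀ ℕ}
    (ha : monomial a (1 : R) ∈ I) (hab : a ≤ b) : monomial b (1 : R) ∈ I := by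
  rw [← tsub_add_cancel_of_le hab, ← mul_one (1 : R), ← monomial_mul]
  exact I.mul_mem_left _ ha

lemma mem_radical_colon_of_forall_mem_support {I : Ideal (MvPolynomial σ R)}
    {f g : MvPolynomial σ R} (h : ∀ m ∈ f.support, g ∈ (I.colon {monomial m 1}).radical) :
    g ∈ (I.colon {f}).radical := by
  classical
  have hf : f ∈ Ideal.span ((fun m => monomial m (1 : R)) '' f.support) :=
    mem_ideal_span_monomial_image.mpr fun m hm => ⟨m, hm, le_rfl⟩
  have hcolon : I.colon ((f.support.image fun m => monomial m (1 : R) : Finset _) : Set _) ≤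
      I.colon {f} := by
    rw [Finset.coe_image, ← Ideal.colon_span]
    exact Submodule.colon_mono le_rfl (Set.singleton_subset_iff.mpr hf)
  refine Ideal.radical_mono hcolon (Ideal.mem_radical_colon_of_forall_mem ?_)
  simpa using h

end MvPolynomial

section MonomialIdeal

variable {n : ℕ} {K : Type*} [Field K] {I : Ideal (MvPolynomial (Fin n) K)}

lemma IsMonomialIdeal.monomial_mem_of_mem_support (hI : IsMonomialIdeal I)
    {p : MvPolynomial (Fin n) K} (hp : p ∈ I) {m : Fin n →₀ ℕ} (hm : m ∈ p.support) :
    monomial m (1 : K) ∈ I := by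
  obtain ⟨A, rfl⟩ := hI
  obtain ⟨a, ha, ham⟩ := mem_ideal_span_monomial_image.mp hp m hm
  exact monomial_one_mem_of_le (Ideal.subset_span ⟨a, ha, rfl⟩) ham

lemma IsMonomialIdeal.X_mem_radical_colon_monomial (hI : IsMonomialIdeal I) {i : Fin n}
    {f : MvPolynomial (Fin n) K} (hf : X i ∈ (I.colon {f}).radical) {m : Fin n →₀ ℕ}
    (hm : m ∈ f.support) : X i ∈ (I.colon {monomial m 1}).radical := by
  obtain ⟨k, hk⟩ := hf
  refine ⟨k, Submodule.mem_colon_singleton.mpr ?_⟩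
  rw [Submodule.mem_colon_singleton, smul_eq_mul] at hk
  rw [smul_eq_mul, X_pow_eq_monomial, monomial_mul, one_mul]
  refine hI.monomial_mem_of_mem_support hk ?_
  rwa [X_pow_eq_monomial, mem_support_iff, coeff_monomial_mul, one_mul, ← mem_support_iff]

lemma IsSBT.X_mem_radical_colon_monomial_of_lt (hI : IsSBT I) {i j : Fin n} (hij : i < j)
    {m : Fin n →₀ ℕ} (hj : X j ∈ (I.colon {monomial m (1 : K)}).radical) :
    X i ∈ (I.colon {monomial m (1 : K)}).radical := by
  obtain ⟨k, hk⟩ := hj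
  rw [Submodule.mem_colon_singleton, smul_eq_mul, X_pow_eq_monomial, monomial_mul, one_mul]
    at hk
  obtain ⟨t, -, ht⟩ := hI.2 _ hk i j hij
  refine ⟨t, Submodule.mem_colon_singleton.mpr ?_⟩
  rw [smul_eq_mul, X_pow_eq_monomial, monomial_mul, one_mul]
  refine monomial_one_mem_of_le ht ?_
  have herase : Finsupp.update (Finsupp.single j k + m) j 0 ≤ m := by
    intro x
    rcases eq_or_ne x j with rfl | hx <;> simp_all
  rw [add_comm (Finsupp.single i t)]
  exact add_le_add herase le_rfl

end MonomialIdeal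

lemma mem_satIdeal_iff_le_radical_colon {n : ℕ} {K : Type*} [Field K]
    {I T : Ideal (MvPolynomial (Fin n) K)} {f : MvPolynomial (Fin n) K} :
    f ∈ satIdeal I T ↔ T ≤ (I.colon {f}).radical := by
  have hmono : Monotone fun k => I.colon ((T ^ (k + 1) : Ideal _) : Set (MvPolynomial _ K)) :=
    fun _ _ hab => Submodule.colon_mono le_rfl
      (SetLike.coe_subset_coe.mpr (Ideal.pow_le_pow_right (Nat.succ_le_succ hab)))
  have hsat : satIdeal I T = ⨆ k, I.colon ((T ^ (k + 1) : Ideal _) : Set (MvPolynomial _ K)) := by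
    simp only [satIdeal, Set.mem_ofPred_eq, ← ge_iff_le]
    rw [iSup_ge_eq_iSup_nat_add]
  rw [hsat, Submodule.mem_iSup_of_directed _ hmono.directed_le]
  constructor
  · rintro ⟨k, hk⟩ x hx
    refine ⟨k + 1, Submodule.mem_colon_singleton.mpr ?_⟩
    rw [smul_eq_mul, mul_comm, ← smul_eq_mul]
    exact Submodule.mem_colon.mp hk _ (Ideal.pow_mem_pow hx _)
  · intro h
    obtain ⟨k, hk⟩ := Ideal.exists_pow_le_of_le_radical_of_fg h (IsNoetherian.noetherian T)
    refine ⟨k, Submodule.mem_colon.mpr fun p hp => ?_⟩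
    have hpf := Submodule.mem_colon_singleton.mp (hk (Ideal.pow_le_pow_right k.le_succ hp))
    rwa [smul_eq_mul, mul_comm, ← smul_eq_mul] at hpf

theorem sbt_is_borel_type_general {n : ℕ} {K : Type*} [Field K]
    (I : Ideal (MvPolynomial (Fin n) K)) (hI : IsSBT I) (j : Fin n) :
    satIdeal I (Ideal.span {(X j : MvPolynomial (Fin n) K)}) =
      satIdeal I (Ideal.span {g : MvPolynomial (Fin n) K | ∃ i : Fin n, i ≤ j ∧ g = X i}) := by
  ext f
  simp only [mem_satIdeal_iff_le_radical_colon, Ideal.span_le, Set.singleton_subset_iff,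
    SetLike.mem_coe]
  constructor
  · rintro hj _ ⟨i, hij, rfl⟩
    rcases hij.lt_or_eq with hij | rfl
    · exact MvPolynomial.mem_radical_colon_of_forall_mem_support fun m hm =>
        hI.X_mem_radical_colon_monomial_of_lt hij (hI.1.X_mem_radical_colon_monomial hj hm)
    · exact hj
  · exact fun h => h ⟨j, le_rfl, rfl⟩

/-- If `I` is a monomial ideal of strong Borel type then `I` is of Borel type, i.e.
`(I : x_j^∞) = (I : (x_1,…,x_j)^∞)` for every `j`. -/
theorem sbt_is_borel_type {n : ℕ} (hn : 2 ≤ n) {K : Type*} [Field K]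
    (I : Ideal (MvPolynomial (Fin n) K)) (hI : IsSBT I) (j : Fin n) :
    satIdeal I (Ideal.span {(X j : MvPolynomial (Fin n) K)}) =
      satIdeal I (Ideal.span {g : MvPolynomial (Fin n) K | ∃ i : Fin n, i ≤ j ∧ g = X i}) :=
  sbt_is_borel_type_general I hI j
end

section
/- If I and J are monomial ideals of strong Borel type in S, then the product I · J is again a monomial ideal of strong Borel type. -/
/-!
A monomial `x^m` of `I · J` is divisible by a product `x^u x^v` of generators of `I` and `J`,
so it factors as `x^a · x^b` with `x^a ∈ I` and `x^b ∈ J`. Applying the strong Borel moves to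
the two factors separately, with exponents `s` and `t`, and multiplying the results gives the
move of `x^m` with exponent `s + t ≤ a_i + b_i = m_i`.
-/

open MvPolynomial

open Pointwise

namespace Finsupp

lemma update_add_zero_add_single_add {ι M : Type*} [AddCommMonoid M] [DecidableEq ι]
    (a b : ι →₀ M) (i j : ι) (s t : M) :
    (a + b).update i 0 + single j (s + t) =
      (a.update i 0 + single j s) + (b.update i 0 + single j t) := by
  simp only [← erase_eq_update_zero, erase_add, single_add]
  abel

end Finsupp

namespace MvPolynomial

variable {σ R : Type*} [CommSemiring R]

lemma image_monomial_one_add (A B : Set (σ →₀ ℕ)) :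
    (fun m => monomial m (1 : R)) '' (A + B) =
      (fun m => monomial m (1 : R)) '' A * (fun m => monomial m (1 : R)) '' B := by
  simp only [← Set.image2_add, ← Set.image2_mul, Set.image_image2, Set.image2_image_left,
    Set.image2_image_right, monomial_mul, one_mul]

lemma span_monomial_one_mul_span_monomial_one (A B : Set (σ →₀ ℕ)) :
    Ideal.span ((fun m => monomial m (1 : R)) '' A) *
        Ideal.span ((fun m => monomial m (1 : R)) '' B) =
      Ideal.span ((fun m => monomial m (1 : R)) '' (A + B)) := by
  rw [Ideal.span_mul_span', image_monomial_one_add]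

lemma monomial_one_mem_span_monomial_one_iff [Nontrivial R] {A : Set (σ →₀ ℕ)}
    {m : σ →₀ ℕ} :
    monomial m (1 : R) ∈ Ideal.span ((fun m => monomial m (1 : R)) '' A) ↔ ∃ a ∈ A, a ≤ m := by
  classical rw [mem_ideal_span_monomial_image, support_monomial, if_neg one_ne_zero]
  simp

lemma exists_add_eq_of_monomial_one_mem_span_mul [Nontrivial R] {A B : Set (σ →₀ ℕ)}
    {m : σ →₀ ℕ}
    (hm : monomial m (1 : R) ∈ Ideal.span ((fun m => monomial m (1 : R)) '' A) *
      Ideal.span ((fun m => monomial m (1 : R)) '' B)) :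
    ∃ a b, a + b = m ∧ monomial a (1 : R) ∈ Ideal.span ((fun m => monomial m (1 : R)) '' A) ∧
      monomial b (1 : R) ∈ Ideal.span ((fun m => monomial m (1 : R)) '' B) := by
  rw [span_monomial_one_mul_span_monomial_one, monomial_one_mem_span_monomial_one_iff] at hm
  obtain ⟨_, ⟨u, hu, v, hv, rfl⟩, huv⟩ := hm
  refine ⟨m - v, v, tsub_add_cancel_of_le (le_trans le_add_self huv), ?_, ?_⟩
  · exact monomial_one_mem_span_monomial_one_iff.mpr ⟨u, hu, le_tsub_of_add_le_right huv⟩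
  · exact monomial_one_mem_span_monomial_one_iff.mpr ⟨v, hv, le_rfl⟩

end MvPolynomial

namespace IsMonomialIdeal

variable {n : ℕ} {K : Type*} [Field K] {I J : Ideal (MvPolynomial (Fin n) K)}

lemma mul (hI : IsMonomialIdeal I) (hJ : IsMonomialIdeal J) : IsMonomialIdeal (I * J) := by
  obtain ⟨A, rfl⟩ := hI
  obtain ⟨B, rfl⟩ := hJ
  exact ⟨A + B, span_monomial_one_mul_span_monomial_one A B⟩

lemma exists_add_eq_of_monomial_mem_mul (hI : IsMonomialIdeal I) (hJ : IsMonomialIdeal J)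
    {m : Fin n →₀ ℕ} (hm : monomial m (1 : K) ∈ I * J) :
    ∃ a b, a + b = m ∧ monomial a (1 : K) ∈ I ∧ monomial b (1 : K) ∈ J := by
  obtain ⟨A, rfl⟩ := hI
  obtain ⟨B, rfl⟩ := hJ
  exact exists_add_eq_of_monomial_one_mem_span_mul hm

end IsMonomialIdeal

theorem sbt_mul_general {n : ℕ} {K : Type*} [Field K]
    (I J : Ideal (MvPolynomial (Fin n) K)) (hI : IsSBT I) (hJ : IsSBT J) :
    IsSBT (I * J) := by
  refine ⟨hI.1.mul hJ.1, fun m hm j i hji => ?_⟩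
  obtain ⟨a, b, rfl, ha, hb⟩ := hI.1.exists_add_eq_of_monomial_mem_mul hJ.1 hm
  obtain ⟨s, hs, has⟩ := hI.2 a ha j i hji
  obtain ⟨t, ht, hbt⟩ := hJ.2 b hb j i hji
  refine ⟨s + t, add_le_add hs ht, ?_⟩
  rw [Finsupp.update_add_zero_add_single_add, ← one_mul (1 : K), ← monomial_mul]
  exact Ideal.mul_mem_mul has hbt

/-- The product of two monomial ideals of strong Borel type is of strong Borel type. -/
theorem sbt_mul {n : ℕ} (hn : 2 ≤ n) {K : Type*} [Field K]
    (I J : Ideal (MvPolynomial (Fin n) K)) (hI : IsSBT I) (hJ : IsSBT J) :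
    IsSBT (I * J) :=
  sbt_mul_general I J hI hJ
end

section
/- If I and J are monomial ideals of strong Borel type in S, then the intersection I ∩ J is again a monomial ideal of strong Borel type. -/
open MvPolynomial

theorem MvPolynomial.monomial_one_mem_of_le_s3 {σ R : Type*} [CommSemiring R]
    {I : Ideal (MvPolynomial σ R)} {a c : σ →₀ ℕ} (ha : monomial a (1 : R) ∈ I) (hac : a ≤ c) :
    monomial c (1 : R) ∈ I := by
  rw [← tsub_add_cancel_of_le hac, ← one_mul (1 : R), ← monomial_mul]
  exact I.mul_mem_left _ ha

theorem isMonomialIdeal_iff {n : ℕ} {K : Type*} [Field K] {I : Ideal (MvPolynomial (Fin n) K)} :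
    IsMonomialIdeal I ↔ ∀ p ∈ I, ∀ m ∈ p.support, monomial m (1 : K) ∈ I := by
  classical
  constructor
  · rintro ⟨A, rfl⟩ p hp m hm
    obtain ⟨a, haA, ham⟩ := (mem_ideal_span_monomial_image.mp hp) m hm
    exact monomial_one_mem_of_le_s3 (Ideal.subset_span ⟨a, haA, rfl⟩) ham
  · intro h
    refine ⟨{m | monomial m (1 : K) ∈ I}, le_antisymm (fun p hp => ?_) ?_⟩
    · exact mem_ideal_span_monomial_image.mpr fun m hm => ⟨m, h p hp m hm, le_rfl⟩
    · rw [Ideal.span_le]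
      rintro _ ⟨m, hm, rfl⟩
      exact hm

theorem IsMonomialIdeal.inf {n : ℕ} {K : Type*} [Field K] {I J : Ideal (MvPolynomial (Fin n) K)}
    (hI : IsMonomialIdeal I) (hJ : IsMonomialIdeal J) : IsMonomialIdeal (I ⊓ J) :=
  isMonomialIdeal_iff.mpr fun p hp m hm =>
    ⟨isMonomialIdeal_iff.mp hI p hp.1 m hm, isMonomialIdeal_iff.mp hJ p hp.2 m hm⟩

theorem sbt_inf_general {n : ℕ} {K : Type*} [Field K]
    (I J : Ideal (MvPolynomial (Fin n) K)) (hI : IsSBT I) (hJ : IsSBT J) :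
    IsSBT (I ⊓ J) := by
  refine ⟨hI.1.inf hJ.1, fun m hm j i hji => ?_⟩
  obtain ⟨tI, htI, hmI⟩ := hI.2 m hm.1 j i hji
  obtain ⟨tJ, htJ, hmJ⟩ := hJ.2 m hm.2 j i hji
  refine ⟨max tI tJ, max_le htI htJ, monomial_one_mem_of_le_s3 hmI ?_, monomial_one_mem_of_le_s3 hmJ ?_⟩
  all_goals gcongr
  exacts [le_max_left _ _, le_max_right _ _]

/-- The intersection of two monomial ideals of strong Borel type is of strong Borel type. -/
theorem sbt_inf {n : ℕ} (hn : 2 ≤ n) {K : Type*} [Field K]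
    (I J : Ideal (MvPolynomial (Fin n) K)) (hI : IsSBT I) (hJ : IsSBT J) :
    IsSBT (I ⊓ J) :=
  sbt_inf_general I J hI hJ
end

section
/- Let 1 ≤ j ≤ j' ≤ n and let α ≥ β be positive integers. Then ⟨x_j^α⟩_d ⊆ ⟨x_{j'}^β⟩_d, i.e., every d-fixed monomial ideal of S containing x_{j'}^β contains the smallest d-fixed ideal containing x_j^α. -/
open MvPolynomial

/-- `c 0, …, c s` is the `d`-decomposition of `a`:
`a = Σ_{t=0}^s (c t) * (d t)` with `c t < d (t+1) / d t` for `t < s`. -/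
def IsDDecomp (d : ℕ → ℕ) (s : ℕ) (a : ℕ) (c : ℕ → ℕ) : Prop :=
  a = ∑ t ∈ Finset.range (s + 1), c t * d t ∧ ∀ t < s, c t < d (t + 1) / d t

/-- `a ≤_d b`: the coefficients of the `d`-decomposition of `a` are componentwise at
most those of `b`. -/
def dLE (d : ℕ → ℕ) (s : ℕ) (a b : ℕ) : Prop :=
  ∃ ca cb : ℕ → ℕ, IsDDecomp d s a ca ∧ IsDDecomp d s b cb ∧ ∀ t ≤ s, ca t ≤ cb t

/-- A monomial ideal `I` is `d`-fixed if for every monomial `u ∈ I`, all `j < i` and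
every `t ≤_d ν_i(u)`, the monomial `u · x_j^t / x_i^t` lies in `I`. -/
def IsDFixed (d : ℕ → ℕ) (s : ℕ) {n : ℕ} {K : Type*} [Field K]
    (I : Ideal (MvPolynomial (Fin n) K)) : Prop :=
  IsMonomialIdeal I ∧
    ∀ m : Fin n →₀ ℕ, (monomial m (1 : K) : MvPolynomial (Fin n) K) ∈ I →
      ∀ j i : Fin n, j < i → ∀ t : ℕ, dLE d s t (m i) →
        (monomial (m - Finsupp.single i t + Finsupp.single j t) (1 : K) :
          MvPolynomial (Fin n) K) ∈ I

/-- `⟨U⟩_d`: the smallest `d`-fixed ideal containing `U`, i.e. the intersection of all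
`d`-fixed ideals containing `U`. -/
noncomputable def dFixedSpan (d : ℕ → ℕ) (s : ℕ) {n : ℕ} {K : Type*} [Field K]
    (U : Set (MvPolynomial (Fin n) K)) : Ideal (MvPolynomial (Fin n) K) :=
  sInf {J : Ideal (MvPolynomial (Fin n) K) | IsDFixed d s J ∧ U ⊆ ↑J}

section DDecomp

variable {d : ℕ → ℕ} {s : ℕ}

lemma pos_of_lt_succ (h0 : 0 < d 0) (hdlt : ∀ t < s, d t < d (t + 1)) :
    ∀ t ≤ s, 0 < d t
  | 0, _ => h0
  | t + 1, ht => (pos_of_lt_succ h0 hdlt t (by omega)).trans (hdlt t (by omega))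

/-- The `t`-th digit of `a` in the mixed radix `d`; the top digit `t = s` is unbounded. -/
def ddecompCoeff (d : ℕ → ℕ) (s a t : ℕ) : ℕ :=
  if t = s then a / d s else a % d (t + 1) / d t

lemma sum_ddecompCoeff_mul_eq_mod (hd0 : d 0 = 1) (hdvd : ∀ t < s, d t ∣ d (t + 1))
    (a : ℕ) : ∀ k ≤ s, ∑ t ∈ Finset.range k, ddecompCoeff d s a t * d t = a % d k
  | 0, _ => by simp [hd0, Nat.mod_one]
  | k + 1, hk => by
    have hks : k ≠ s := by omega
    rw [Finset.sum_range_succ, sum_ddecompCoeff_mul_eq_mod hd0 hdvd a k (by omega),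
      ddecompCoeff, if_neg hks, ← Nat.mod_mod_of_dvd a (hdvd k (by omega)),
      Nat.mod_add_div']

lemma isDDecomp_ddecompCoeff (hd0 : d 0 = 1) (hdvd : ∀ t < s, d t ∣ d (t + 1))
    (hdlt : ∀ t < s, d t < d (t + 1)) (a : ℕ) : IsDDecomp d s a (ddecompCoeff d s a) := by
  refine ⟨?_, fun t ht => ?_⟩
  · rw [Finset.sum_range_succ, sum_ddecompCoeff_mul_eq_mod hd0 hdvd a s le_rfl,
      ddecompCoeff, if_pos rfl, Nat.mod_add_div']
  · have hpos := pos_of_lt_succ (hd0 ▸ Nat.one_pos) hdlt (t + 1) ht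
    rw [ddecompCoeff, if_neg ht.ne]
    exact Nat.div_lt_div_of_lt_of_dvd (hdvd t ht) (Nat.mod_lt a hpos)

lemma dLE_refl_of_isDDecomp {a : ℕ} {c : ℕ → ℕ} (hc : IsDDecomp d s a c) : dLE d s a a :=
  ⟨c, c, hc, hc, fun _ _ => le_rfl⟩

end DDecomp

section DFixed

variable {d : ℕ → ℕ} {s n : ℕ} {K : Type*} [Field K]

lemma IsDFixed.X_pow_mem_of_lt {J : Ideal (MvPolynomial (Fin n) K)} (hJ : IsDFixed d s J)
    {i j : Fin n} (hji : j < i) {a : ℕ} (ha : dLE d s a a)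
    (hmem : (X i : MvPolynomial _ K) ^ a ∈ J) :
    (X j : MvPolynomial _ K) ^ a ∈ J := by
  rw [X_pow_eq_monomial] at hmem ⊢
  simpa using hJ.2 (Finsupp.single i a) hmem j i hji a (by rwa [Finsupp.single_eq_same])

lemma dFixedSpan_le_dFixedSpan {U V : Set (MvPolynomial (Fin n) K)}
    (h : ∀ J : Ideal (MvPolynomial (Fin n) K), IsDFixed d s J → V ⊆ J → U ⊆ J) :
    dFixedSpan d s U ≤ dFixedSpan d s V :=
  sInf_le_sInf fun J ⟨hJ, hV⟩ => ⟨hJ, h J hJ hV⟩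

end DFixed

theorem dfixed_span_pow_le_general {n : ℕ} {K : Type*} [Field K]
    (s : ℕ) (d : ℕ → ℕ) (hd0 : d 0 = 1)
    (hdvd : ∀ t < s, d t ∣ d (t + 1)) (hdlt : ∀ t < s, d t < d (t + 1))
    (j j' : Fin n) (hjj : j ≤ j') (α β : ℕ) (hβα : β ≤ α) :
    dFixedSpan d s {(X j : MvPolynomial (Fin n) K) ^ α} ≤
      dFixedSpan d s {(X j' : MvPolynomial (Fin n) K) ^ β} := by
  refine dFixedSpan_le_dFixedSpan fun J hJ hβ => ?_
  rw [Set.singleton_subset_iff] at hβ ⊢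
  have hα : (X j' : MvPolynomial (Fin n) K) ^ α ∈ J := J.pow_mem_of_pow_mem hβ hβα
  rcases hjj.eq_or_lt with rfl | hlt
  · exact hα
  · exact hJ.X_pow_mem_of_lt hlt
      (dLE_refl_of_isDDecomp (isDDecomp_ddecompCoeff hd0 hdvd hdlt α)) hα

/-- If `1 ≤ j ≤ j' ≤ n` and `α ≥ β ≥ 1`, then `⟨x_j^α⟩_d ⊆ ⟨x_{j'}^β⟩_d`. -/
theorem dfixed_span_pow_le {n : ℕ} (hn : 2 ≤ n) {K : Type*} [Field K]
    (s : ℕ) (d : ℕ → ℕ) (hd0 : d 0 = 1)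
    (hdvd : ∀ t < s, d t ∣ d (t + 1)) (hdlt : ∀ t < s, d t < d (t + 1))
    (j j' : Fin n) (hjj : j ≤ j') (α β : ℕ) (hβ : 1 ≤ β) (hβα : β ≤ α) :
    dFixedSpan d s {(X j : MvPolynomial (Fin n) K) ^ α} ≤
      dFixedSpan d s {(X j' : MvPolynomial (Fin n) K) ^ β} :=
  dfixed_span_pow_le_general s d hd0 hdvd hdlt j j' hjj α β hβα
end

section
/- Let n ≥ 2, let 1 ≤ i_1 < i_2 < ⋯ < i_r = n be integers, and let α_1 < α_2 < ⋯ < α_r be positive integers with d-decompositions α_q = Σ_{t=0}^{s} α_{qt} d_t. Then ⟨x_{i_1}^{α_1}, x_{i_2}^{α_2}, …, x_{i_r}^{α_r}⟩_d = Σ_{q=1}^{r} ∏_{t=0}^{s} ((x_1^{d_t}, x_2^{d_t}, …, x_{i_q}^{d_t}))^{α_{qt}}. -/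
open MvPolynomial

/-! Write each exponent of a generator of `∏_t (x_1^{d_t}, …, x_i^{d_t})^{c_t}` as the matrix of
its digits: row `l` lists the `d`-digits of the exponent of `x_{l+1}`, and column `t` sums to `c_t`.
The right-hand side is `d`-fixed: a move `x_j^t / x_k^t` with `t ≤_d m_k`, applied to a multiple
`x^m` of a generator, is absorbed by shifting part of row `k` of the generator to row `j`. Such a
part exists because the digits of `m_k - t` and of `t` add without carry.
Conversely, a `d`-fixed ideal containing `x_i^α` contains every generator: starting from the pure
power, split the rows off the last variable one at a time; each step is a `d`-move, because the
digits of one row are dominated by those of the sum of the rows still gathered. -/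

open Finset

section Digits

variable (d : ℕ → ℕ)

def dVal (c : ℕ → ℕ) (p : ℕ) : ℕ := ∑ τ ∈ range p, c τ * d τ

variable {d}

lemma dVal_succ (c : ℕ → ℕ) (p : ℕ) : dVal d c (p + 1) = dVal d c p + c p * d p :=
  sum_range_succ _ _

lemma dVal_add (c c' : ℕ → ℕ) (p : ℕ) : dVal d (c + c') p = dVal d c p + dVal d c' p := by
  simp only [dVal, Pi.add_apply, add_mul, sum_add_distrib]

lemma dVal_sum {ι : Type*} (S : Finset ι) (c : ι → ℕ → ℕ) (p : ℕ) :
    dVal d (∑ k ∈ S, c k) p = ∑ k ∈ S, dVal d (c k) p := by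
  simp only [dVal, Finset.sum_apply, sum_mul]
  exact sum_comm

lemma dVal_congr {c c' : ℕ → ℕ} {p : ℕ} (h : ∀ τ < p, c τ = c' τ) : dVal d c p = dVal d c' p :=
  sum_congr rfl fun τ hτ => by rw [h τ (mem_range.1 hτ)]

lemma dVal_update_of_le (f : ℕ → ℕ) {p q : ℕ} (v : ℕ) (hq : q ≤ p) :
    dVal d (Function.update f p v) q = dVal d f q :=
  dVal_congr fun τ hτ => Function.update_of_ne (by omega) _ _

lemma dVal_lt {c : ℕ → ℕ} {p : ℕ} (hd0 : 0 < d 0) (hdvd : ∀ τ < p, d τ ∣ d (τ + 1))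
    (hc : ∀ τ < p, c τ < d (τ + 1) / d τ) : dVal d c p < d p := by
  induction p with
  | zero => simpa [dVal] using hd0
  | succ p ih =>
    calc dVal d c (p + 1) = dVal d c p + c p * d p := dVal_succ c p
      _ < (c p + 1) * d p := by
        rw [add_mul, one_mul, add_comm]
        exact Nat.add_lt_add_left (ih (fun τ hτ => hdvd τ (by omega)) fun τ hτ => hc τ (by omega)) _
      _ ≤ d (p + 1) / d p * d p := Nat.mul_le_mul_right _ (hc p p.lt_succ_self)
      _ = d (p + 1) := Nat.div_mul_cancel (hdvd p p.lt_succ_self)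

lemma exists_digit_split_of_lt {p : ℕ} {a x y : ℕ → ℕ} (ha : dVal d a p < d p)
    (hlt : a p < x p + y p) :
    ∃ γ β : ℕ → ℕ, (∀ τ < p + 1, γ τ + β τ = a τ) ∧
      dVal d γ (p + 1) ≤ dVal d x (p + 1) ∧ dVal d β (p + 1) ≤ dVal d y (p + 1) := by
  have hmul : ∀ {k l : ℕ}, k < l → k * d p + d p ≤ l * d p := fun h => by
    simpa [add_mul] using Nat.mul_le_mul_right (d p) (Nat.succ_le_of_lt h)
  by_cases hax : a p < x p
  · refine ⟨a, 0, fun τ _ => add_zero _, ?_, by simp [dVal]⟩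
    have := hmul hax
    rw [dVal_succ, dVal_succ]
    omega
  · refine ⟨Function.update 0 p (x p), Function.update a p (a p - x p), fun τ hτ => ?_, ?_, ?_⟩
    · rcases Nat.lt_succ_iff_lt_or_eq.1 hτ with hτ | rfl
      · simp [Function.update_of_ne (Nat.ne_of_lt hτ)]
      · simp only [Function.update_self]; omega
    · simp only [dVal_succ, dVal_update_of_le _ _ le_rfl, Function.update_self]
      simp [dVal]
    · have := hmul (show a p - x p < y p by omega)
      simp only [dVal_succ, dVal_update_of_le _ _ le_rfl, Function.update_self]
      omega

lemma exists_digit_split {p : ℕ} (hd0 : 0 < d 0) (hdvd : ∀ τ, τ + 1 < p → d τ ∣ d (τ + 1))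
    {a x y : ℕ → ℕ} (ha : ∀ τ, τ + 1 < p → a τ < d (τ + 1) / d τ)
    (hxy : ∀ τ, τ + 1 < p → x τ + y τ < d (τ + 1) / d τ)
    (h : dVal d a p ≤ dVal d x p + dVal d y p) :
    ∃ γ β : ℕ → ℕ, (∀ τ < p, γ τ + β τ = a τ) ∧
      dVal d γ p ≤ dVal d x p ∧ dVal d β p ≤ dVal d y p := by
  induction p generalizing a x y with
  | zero => exact ⟨0, 0, fun τ hτ => absurd hτ (Nat.not_lt_zero τ), by simp [dVal], by simp [dVal]⟩
  | succ p ih =>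
    have hdvd' : ∀ τ < p, d τ ∣ d (τ + 1) := fun τ hτ => hdvd τ (by omega)
    have ha' : dVal d a p < d p := dVal_lt hd0 hdvd' fun τ hτ => ha τ (by omega)
    have hxy' : dVal d x p + dVal d y p < d p := by
      rw [← dVal_add]; exact dVal_lt hd0 hdvd' fun τ hτ => hxy τ (by omega)
    rw [dVal_succ, dVal_succ, dVal_succ] at h
    have htop : a p ≤ x p + y p := by
      by_contra! hgt
      have := Nat.mul_le_mul_right (d p) (Nat.succ_le_of_lt hgt)
      simp only [Nat.succ_eq_add_one, add_mul, one_mul] at this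
      omega
    rcases htop.lt_or_eq with hlt | heq
    · exact exists_digit_split_of_lt ha' hlt
    obtain ⟨γ, β, hγβ, hγ, hβ⟩ := ih (fun τ hτ => hdvd τ (by omega)) (fun τ hτ => ha τ (by omega))
      (fun τ hτ => hxy τ (by omega)) (by rw [heq, add_mul] at h; omega)
    refine ⟨Function.update γ p (x p), Function.update β p (y p), fun τ hτ => ?_, ?_, ?_⟩
    · rcases Nat.lt_succ_iff_lt_or_eq.1 hτ with hτ | rfl
      · simp [Function.update_of_ne (Nat.ne_of_lt hτ), hγβ τ hτ]
      · simp only [Function.update_self]; omega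
    · simp only [dVal_succ, dVal_update_of_le _ _ le_rfl, Function.update_self]; omega
    · simp only [dVal_succ, dVal_update_of_le _ _ le_rfl, Function.update_self]; omega

end Digits

section MonomialIdeal

open scoped Pointwise

variable {σ : Type*} (R : Type*) [CommSemiring R]

noncomputable def monomialIdeal (A : Set (σ →₀ ℕ)) : Ideal (MvPolynomial σ R) :=
  Ideal.span ((fun u => monomial u (1 : R)) '' A)

variable {R}

lemma monomial_mem_monomialIdeal [Nontrivial R] {A : Set (σ →₀ ℕ)} {m : σ →₀ ℕ} :
    monomial m (1 : R) ∈ monomialIdeal R A ↔ ∃ a ∈ A, a ≤ m := by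
  classical
  simp [monomialIdeal, mem_ideal_span_monomial_image, support_monomial]

lemma monomialIdeal_mul_monomialIdeal (A B : Set (σ →₀ ℕ)) :
    monomialIdeal R A * monomialIdeal R B = monomialIdeal R (A + B) := by
  rw [monomialIdeal, monomialIdeal, Ideal.span_mul_span', monomialIdeal]
  congr 1
  ext p
  simp only [Set.mem_mul, Set.mem_image, Set.mem_add]
  constructor
  · rintro ⟨_, ⟨a, ha, rfl⟩, _, ⟨b, hb, rfl⟩, rfl⟩
    exact ⟨a + b, ⟨a, ha, b, hb, rfl⟩, by rw [monomial_mul, one_mul]⟩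
  · rintro ⟨_, ⟨a, ha, b, hb, rfl⟩, rfl⟩
    exact ⟨_, ⟨a, ha, rfl⟩, _, ⟨b, hb, rfl⟩, by rw [monomial_mul, one_mul]⟩

lemma monomialIdeal_zero : monomialIdeal R ({0} : Set (σ →₀ ℕ)) = ⊤ := by
  simp [monomialIdeal]

lemma prod_monomialIdeal {ι : Type*} (F : Finset ι) (A : ι → Set (σ →₀ ℕ)) :
    ∏ t ∈ F, monomialIdeal R (A t) = monomialIdeal R (∑ t ∈ F, A t) := by
  classical
  induction F using Finset.induction_on with
  | empty => simp [← Set.singleton_zero, monomialIdeal_zero]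
  | insert t F ht ih => rw [prod_insert ht, sum_insert ht, ih, monomialIdeal_mul_monomialIdeal]

lemma sum_monomialIdeal {ι : Type*} (F : Finset ι) (A : ι → Set (σ →₀ ℕ)) :
    ∑ q ∈ F, monomialIdeal R (A q) = monomialIdeal R (⋃ q ∈ F, A q) := by
  classical
  induction F using Finset.induction_on with
  | empty => simp [monomialIdeal]
  | insert q F hq ih =>
    rw [sum_insert hq, ih, Finset.set_biUnion_insert, monomialIdeal, monomialIdeal, monomialIdeal,
      Set.image_union, Ideal.span_union, Submodule.add_eq_sup]

end MonomialIdeal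

section Exponents

open scoped Pointwise

variable {n : ℕ}

def powExponents (i c e : ℕ) : Set (Fin n →₀ ℕ) :=
  {u | ∃ w : Fin n → ℕ, (∑ l, w l = c ∧ ∀ l : Fin n, i ≤ l → w l = 0) ∧ ∀ l, u l = w l * e}

lemma powExponents_zero (i e : ℕ) : powExponents i 0 e = ({0} : Set (Fin n →₀ ℕ)) := by
  ext u
  simp only [powExponents, Set.mem_ofPred_eq, Set.mem_singleton_iff, sum_eq_zero_iff, mem_univ,
    true_implies]
  constructor
  · rintro ⟨w, ⟨hw, -⟩, hu⟩
    ext l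
    simp [hu, hw]
  · rintro rfl
    exact ⟨0, by simp, by simp⟩

lemma powExponents_succ (i c e : ℕ) :
    powExponents i (c + 1) e =
      powExponents i c e +
        {u : Fin n →₀ ℕ | ∃ l : Fin n, (l : ℕ) < i ∧ u = Finsupp.single l e} := by
  ext u
  simp only [powExponents, Set.mem_add, Set.mem_ofPred_eq]
  constructor
  · rintro ⟨w, ⟨hsum, hsupp⟩, hu⟩
    obtain ⟨l, hl⟩ : ∃ l, w l ≠ 0 := by
      by_contra! h
      simp [h] at hsum
    obtain ⟨k, hk⟩ := Nat.exists_eq_succ_of_ne_zero hl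
    have hw : w = Function.update w l k + Pi.single l 1 := by
      ext l'
      by_cases h : l' = l
      · subst h; simp [hk]
      · simp [h]
    refine ⟨Finsupp.equivFunOnFinite.symm fun l' => Function.update w l k l' * e,
      ⟨Function.update w l k, ⟨?_, fun l' hl' => ?_⟩, fun _ => rfl⟩,
      Finsupp.single l e, ⟨l, ?_, rfl⟩, ?_⟩
    · rw [hw] at hsum
      simpa [sum_add_distrib] using hsum
    · by_cases h : l' = l
      · subst h; exact absurd (hsupp _ hl') hl
      · simp [h, hsupp l' hl']
    · by_contra! h
      exact hl (hsupp l h)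
    · ext l'
      rw [hu, hw]
      by_cases h : l' = l
      · subst h; simp [add_mul]
      · simp [h]
  · rintro ⟨v, ⟨w, ⟨hsum, hsupp⟩, hv⟩, _, ⟨l, hl, rfl⟩, rfl⟩
    refine ⟨w + Pi.single l 1, ⟨by simp [sum_add_distrib, hsum], fun l' hl' => ?_⟩, fun l' => ?_⟩
    · have : l' ≠ l := by rintro rfl; omega
      simp [hsupp l' hl', this]
    · by_cases h : l' = l
      · subst h; simp [hv, add_mul]
      · simp [hv, h]

variable {K : Type*} [CommSemiring K]

lemma span_X_pow_pow (i c e : ℕ) :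
    Ideal.span {g : MvPolynomial (Fin n) K | ∃ l : Fin n, (l : ℕ) < i ∧ g = X l ^ e} ^ c =
      monomialIdeal K (powExponents i c e) := by
  induction c with
  | zero => rw [pow_zero, Ideal.one_eq_top, powExponents_zero, monomialIdeal_zero]
  | succ c ih =>
    have hgen : {g : MvPolynomial (Fin n) K | ∃ l : Fin n, (l : ℕ) < i ∧ g = X l ^ e} =
        (fun u => monomial u 1) '' {u | ∃ l : Fin n, (l : ℕ) < i ∧ u = Finsupp.single l e} := by
      ext g
      simp [X_pow_eq_monomial, eq_comm]
    rw [pow_succ, ih, hgen, ← monomialIdeal, monomialIdeal_mul_monomialIdeal, powExponents_succ]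

variable (d : ℕ → ℕ) (s : ℕ)

def dExponents (i : ℕ) (c : ℕ → ℕ) : Set (Fin n →₀ ℕ) :=
  {u | ∃ b : Fin n → ℕ → ℕ, (∀ τ ≤ s, ∑ l, b l τ = c τ ∧ ∀ l : Fin n, i ≤ l → b l τ = 0) ∧
    ∀ l, u l = dVal d (b l) (s + 1)}

lemma sum_powExponents (i : ℕ) (c : ℕ → ℕ) :
    ∑ τ ∈ range (s + 1), powExponents i (c τ) (d τ) = (dExponents d s i c : Set (Fin n →₀ ℕ)) := by
  ext u
  rw [Set.mem_finsetSum]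
  constructor
  · rintro ⟨g, hg, rfl⟩
    have : ∀ τ, ∃ w : Fin n → ℕ, τ ≤ s →
        (∑ l, w l = c τ ∧ ∀ l : Fin n, i ≤ l → w l = 0) ∧ ∀ l, g τ l = w l * d τ := by
      intro τ
      by_cases hτ : τ ≤ s
      · obtain ⟨w, hw⟩ := hg (mem_range.2 (Nat.lt_succ_of_le hτ))
        exact ⟨w, fun _ => hw⟩
      · exact ⟨0, fun h => absurd h hτ⟩
    choose w hw using this
    refine ⟨fun l τ => w τ l, fun τ hτ => (hw τ hτ).1, fun l => ?_⟩
    rw [Finsupp.finsetSum_apply]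
    exact sum_congr rfl fun τ hτ => (hw τ (by rw [mem_range] at hτ; omega)).2 l
  · rintro ⟨b, hb, hu⟩
    refine ⟨fun τ => Finsupp.equivFunOnFinite.symm fun l => b l τ * d τ,
      fun {τ} hτ => ⟨fun l => b l τ, hb τ (by rw [mem_range] at hτ; omega), fun _ => rfl⟩, ?_⟩
    ext l
    rw [Finsupp.finsetSum_apply, hu]
    rfl

lemma prod_span_X_pow_pow (i : ℕ) (c : ℕ → ℕ) :
    ∏ τ ∈ range (s + 1),
        Ideal.span {g : MvPolynomial (Fin n) K | ∃ l : Fin n, (l : ℕ) < i ∧ g = X l ^ d τ} ^ c τ =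
      monomialIdeal K (dExponents d s i c) := by
  simp_rw [span_X_pow_pow]
  rw [prod_monomialIdeal, sum_powExponents]

end Exponents

lemma sum_eq_sum_of_eq_off_pair {ι M : Type*} [Fintype ι] [DecidableEq ι] [AddCommMonoid M]
    {f g : ι → M} {j k : ι} (hjk : j ≠ k) (h : ∀ l, l ≠ j → l ≠ k → f l = g l)
    (hpair : f j + f k = g j + g k) : ∑ l, f l = ∑ l, g l := by
  have hk : k ∈ univ.erase j := mem_erase.2 ⟨hjk.symm, mem_univ k⟩
  rw [← add_sum_erase _ f (mem_univ j), ← add_sum_erase _ f hk, ← add_sum_erase _ g (mem_univ j),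
    ← add_sum_erase _ g hk, ← add_assoc, ← add_assoc, hpair]
  congr 1
  refine sum_congr rfl fun l hl => ?_
  obtain ⟨hlk, hl⟩ := mem_erase.1 hl
  exact h l (mem_erase.1 hl).1 hlk

section DFixed

variable {n : ℕ} (d : ℕ → ℕ) (s : ℕ)

def IsDFixedGens (A : Set (Fin n →₀ ℕ)) : Prop :=
  ∀ u ∈ A, ∀ m : Fin n →₀ ℕ, u ≤ m → ∀ j k : Fin n, j < k → ∀ t : ℕ, dLE d s t (m k) →
    ∃ u' ∈ A, u' ≤ m - Finsupp.single k t + Finsupp.single j t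

variable {d s}

lemma IsDFixedGens.biUnion {ι : Type*} {F : Finset ι} {A : ι → Set (Fin n →₀ ℕ)}
    (h : ∀ q ∈ F, IsDFixedGens d s (A q)) : IsDFixedGens d s (⋃ q ∈ F, A q) := by
  intro u hu m hum j k hjk t ht
  obtain ⟨q, hq, hu⟩ := Set.mem_iUnion₂.1 hu
  obtain ⟨u', hu', hle⟩ := h q hq u hu m hum j k hjk t ht
  exact ⟨u', Set.mem_biUnion hq hu', hle⟩

lemma isDFixed_monomialIdeal {K : Type*} [Field K] {A : Set (Fin n →₀ ℕ)}
    (hA : IsDFixedGens d s A) : IsDFixed d s (monomialIdeal K A) := by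
  refine ⟨⟨A, rfl⟩, fun m hm j k hjk t ht => ?_⟩
  obtain ⟨u, hu, hum⟩ := monomial_mem_monomialIdeal.1 hm
  obtain ⟨u', hu', hle⟩ := hA u hu m hum j k hjk t ht
  exact monomial_mem_monomialIdeal.2 ⟨u', hu', hle⟩

lemma exists_shift_mem_dExponents {i : ℕ} {c : ℕ → ℕ} {b : Fin n → ℕ → ℕ}
    (hb : ∀ τ ≤ s, ∑ l, b l τ = c τ ∧ ∀ l : Fin n, i ≤ l → b l τ = 0) {j k : Fin n}
    (hjk : j < k) {γ β : ℕ → ℕ} (hγβ : ∀ τ ≤ s, γ τ + β τ = b k τ) :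
    ∃ u' ∈ dExponents d s i c, u' k = dVal d γ (s + 1) ∧
      u' j = dVal d (b j) (s + 1) + dVal d β (s + 1) ∧
      ∀ l, l ≠ j → l ≠ k → u' l = dVal d (b l) (s + 1) := by
  let b' : Fin n → ℕ → ℕ := fun l => if l = k then γ else if l = j then b j + β else b l
  refine ⟨Finsupp.equivFunOnFinite.symm fun l => dVal d (b' l) (s + 1),
    ⟨b', fun τ hτ => ⟨?_, fun l hl => ?_⟩, fun l => rfl⟩, by simp [b'], ?_,
    fun l hlj hlk => by simp [b', hlj, hlk]⟩
  · rw [← (hb τ hτ).1]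
    refine sum_eq_sum_of_eq_off_pair hjk.ne (fun l hlj hlk => by simp [b', hlj, hlk]) ?_
    have := hγβ τ hτ
    simp [b', hjk.ne]
    omega
  · have := hγβ τ hτ
    by_cases hlk : l = k
    · subst hlk
      have := (hb τ hτ).2 l hl
      simp only [b', if_pos rfl]
      omega
    by_cases hlj : l = j
    · subst hlj
      have := (hb τ hτ).2 l hl
      have := (hb τ hτ).2 k (hl.trans (Fin.lt_def.1 hjk).le)
      simp only [b', hlk, ↓reduceIte, Pi.add_apply]
      omega
    · simp [b', hlk, hlj, (hb τ hτ).2 l hl]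
  · simp [b', hjk.ne, dVal_add]

lemma isDFixedGens_dExponents (hd0 : 0 < d 0) (hdvd : ∀ τ < s, d τ ∣ d (τ + 1)) {i : ℕ}
    {c : ℕ → ℕ} (hc : ∀ τ < s, c τ < d (τ + 1) / d τ) :
    IsDFixedGens d s (dExponents d s i c : Set (Fin n →₀ ℕ)) := by
  rintro u ⟨b, hb, hu⟩ m hum j k hjk t ⟨ca, cb, ⟨hta, -⟩, ⟨hmk, hcb⟩, hcacb⟩
  change t = dVal d ca (s + 1) at hta
  change m k = dVal d cb (s + 1) at hmk
  replace hum := Finsupp.le_def.1 hum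
  have hbk : ∀ τ ≤ s, b k τ ≤ c τ := fun τ hτ => (hb τ hτ).1 ▸
    single_le_sum (f := fun l => b l τ) (fun _ _ => Nat.zero_le _) (mem_univ k)
  have hmk' : dVal d (cb - ca) (s + 1) + t = m k := by
    rw [hta, hmk, ← dVal_add]
    exact dVal_congr fun τ hτ => Nat.sub_add_cancel (hcacb τ (by omega))
  obtain ⟨γ, β, hγβ, hγ, hβ⟩ := exists_digit_split (p := s + 1) (a := b k) (x := cb - ca)
    (y := ca) hd0 (fun τ hτ => hdvd τ (by omega))
    (fun τ hτ => (hbk τ (by omega)).trans_lt (hc τ (by omega)))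
    (fun τ hτ => by
      rw [Pi.sub_apply, Nat.sub_add_cancel (hcacb τ (by omega))]; exact hcb τ (by omega))
    (by rw [← hu, ← hta, hmk']; exact hum k)
  obtain ⟨u', hu', hk', hj', hl'⟩ := exists_shift_mem_dExponents hb hjk fun τ hτ => hγβ τ (by omega)
  refine ⟨u', hu', Finsupp.le_def.2 fun l => ?_⟩
  simp only [Finsupp.coe_add, Finsupp.coe_tsub, Pi.add_apply, Pi.sub_apply, Finsupp.single_apply]
  by_cases hlk : l = k
  · subst hlk
    simp only [hjk.ne, ↓reduceIte, hk']
    omega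
  have := hum l
  by_cases hlj : l = j
  · subst hlj
    simp only [Ne.symm hlk, ↓reduceIte, hj', ← hu]
    omega
  · simp only [Ne.symm hlk, Ne.symm hlj, ↓reduceIte, hl' l hlj hlk, ← hu]
    omega

end DFixed

section Gather

variable {n : ℕ}

noncomputable def gatherExponent (u : Fin n →₀ ℕ) (l₀ : Fin n) (S : Finset (Fin n)) :
    Fin n →₀ ℕ :=
  Finsupp.equivFunOnFinite.symm fun l => if l = l₀ then ∑ k ∈ Sᶜ, u k else if l ∈ S then u l else 0

lemma gatherExponent_empty (u : Fin n →₀ ℕ) (l₀ : Fin n) :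
    gatherExponent u l₀ ∅ = Finsupp.single l₀ (∑ k, u k) := by
  ext l
  by_cases hl : l = l₀
  · subst hl; simp [gatherExponent]
  · simp [gatherExponent, hl]

lemma gatherExponent_Iio {u : Fin n →₀ ℕ} {l₀ : Fin n} (hu : ∀ k, l₀ < k → u k = 0) :
    gatherExponent u l₀ (Iio l₀) = u := by
  ext l
  rcases lt_trichotomy l l₀ with h | rfl | h
  · simp [gatherExponent, h.ne, h]
  · simp only [gatherExponent, Finsupp.coe_equivFunOnFinite_symm, ↓reduceIte]
    refine sum_eq_single_of_mem l (by simp) fun k hk hkl => hu k ?_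
    exact lt_of_le_of_ne (by simpa using hk) (Ne.symm hkl)
  · simp [gatherExponent, h.ne', not_lt.2 h.le, hu l h]

lemma gatherExponent_insert (u : Fin n →₀ ℕ) {l₀ l : Fin n} {S : Finset (Fin n)} (hl : l ≠ l₀)
    (hlS : l ∉ S) : gatherExponent u l₀ (insert l S) =
      gatherExponent u l₀ S - Finsupp.single l₀ (u l) + Finsupp.single l (u l) := by
  ext l'
  simp only [gatherExponent, Finsupp.coe_equivFunOnFinite_symm, Finsupp.coe_add,
    Finsupp.coe_tsub, Pi.add_apply, Pi.sub_apply, Finsupp.single_apply]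
  by_cases h₀ : l' = l₀
  · subst h₀
    rw [compl_insert, ← add_sum_erase _ _ (mem_compl.2 hlS)]
    simp [hl]
  by_cases h : l' = l
  · subst h
    simp [h₀, hlS]
  · simp [h₀, h, Ne.symm h, Ne.symm h₀]

end Gather

section Generation

variable {n : ℕ} {d : ℕ → ℕ} {s : ℕ} {K : Type*} [Field K]

lemma single_mem_dExponents {i : ℕ} {c : ℕ → ℕ} {l : Fin n} (hl : (l : ℕ) < i) :
    Finsupp.single l (dVal d c (s + 1)) ∈ dExponents d s i c := by
  refine ⟨fun l' τ => if l' = l then c τ else 0, fun τ _ => ⟨by simp, fun l' hl' => ?_⟩,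
    fun l' => ?_⟩
  · have : l' ≠ l := by rintro rfl; omega
    simp [this]
  · by_cases h : l' = l
    · subst h; simp
    · simp [h, dVal]

lemma monomial_mem_of_mem_dExponents {J : Ideal (MvPolynomial (Fin n) K)} (hJ : IsDFixed d s J)
    {c : ℕ → ℕ} (hc : ∀ τ < s, c τ < d (τ + 1) / d τ) {l₀ : Fin n} {i : ℕ}
    (hi : (l₀ : ℕ) + 1 = i) (hgen : monomial (Finsupp.single l₀ (dVal d c (s + 1))) (1 : K) ∈ J)
    {u : Fin n →₀ ℕ} (hu : u ∈ dExponents d s i c) : monomial u (1 : K) ∈ J := by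
  obtain ⟨b, hb, hu⟩ := hu
  have hcol : ∀ S : Finset (Fin n), ∀ τ ≤ s, (∑ k ∈ S, b k) τ ≤ c τ := fun S τ hτ => by
    rw [Finset.sum_apply, ← (hb τ hτ).1]
    exact sum_le_sum_of_subset (subset_univ S)
  have hsum : ∑ k, u k = dVal d c (s + 1) := by
    simp only [hu, ← dVal_sum]
    exact dVal_congr fun τ hτ => by rw [Finset.sum_apply, (hb τ (by omega)).1]
  have hzero : ∀ k, l₀ < k → u k = 0 := fun k hk => by
    rw [hu, dVal_congr (c' := 0) fun τ hτ => (hb τ (by omega)).2 k (by rw [← hi]; exact hk)]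
    simp [dVal]
  rw [← gatherExponent_Iio hzero]
  refine Finset.induction_on' (Iio l₀) (by rwa [gatherExponent_empty, hsum])
    fun l S hl _ hlS ih => ?_
  have hll₀ : l < l₀ := mem_Iio.1 hl
  have hrow : ∀ τ, b l τ ≤ (∑ k ∈ Sᶜ, b k) τ := fun τ => by
    rw [Finset.sum_apply]
    exact single_le_sum (f := fun k => b k τ) (fun _ _ => Nat.zero_le _) (mem_compl.2 hlS)
  have hgathered : ∀ τ < s, (∑ k ∈ Sᶜ, b k) τ < d (τ + 1) / d τ := fun τ hτ =>
    (hcol _ τ hτ.le).trans_lt (hc τ hτ)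
  have hdle : dLE d s (u l) (gatherExponent u l₀ S l₀) := by
    refine ⟨b l, ∑ k ∈ Sᶜ, b k, ⟨hu l, fun τ hτ => (hrow τ).trans_lt (hgathered τ hτ)⟩,
      ⟨?_, hgathered⟩, fun τ _ => hrow τ⟩
    show _ = dVal d (∑ k ∈ Sᶜ, b k) (s + 1)
    simp [gatherExponent, hu, dVal_sum]
  rw [gatherExponent_insert u hll₀.ne hlS]
  exact hJ.2 _ ih l l₀ hll₀ (u l) hdle

end Generation

/-- Here `c q t` is the digit `α_{qt}`, and the variable `x_j` is `X l` with `l + 1 = j`. -/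
theorem dfixed_span_powers_of_variables_general {n : ℕ} {K : Type*} [Field K]
    (s : ℕ) (d : ℕ → ℕ) (hd0 : d 0 = 1)
    (hdvd : ∀ t < s, d t ∣ d (t + 1))
    (r : ℕ) (i α : ℕ → ℕ)
    (hi1 : 1 ≤ i 1) (hin : i r = n) (himono : StrictMonoOn i (Set.Icc 1 r))
    (c : ℕ → ℕ → ℕ) (hc : ∀ q ∈ Finset.Icc 1 r, IsDDecomp d s (α q) (c q)) :
    dFixedSpan d s {g : MvPolynomial (Fin n) K |
        ∃ q ∈ Finset.Icc 1 r, ∃ l : Fin n, (l : ℕ) + 1 = i q ∧ g = X l ^ α q} =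
      ∑ q ∈ Finset.Icc 1 r, ∏ t ∈ Finset.range (s + 1),
        (Ideal.span {g : MvPolynomial (Fin n) K |
          ∃ l : Fin n, (l : ℕ) < i q ∧ g = X l ^ d t}) ^ c q t := by
  have hbounds : ∀ q ∈ Icc 1 r, 1 ≤ i q ∧ i q ≤ n := fun q hq => by
    obtain ⟨h1, hr⟩ := mem_Icc.1 hq
    exact ⟨hi1.trans (himono.monotoneOn ⟨le_rfl, h1.trans hr⟩ ⟨h1, hr⟩ h1),
      hin ▸ himono.monotoneOn ⟨h1, hr⟩ ⟨h1.trans hr, le_rfl⟩ hr⟩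
  have hα : ∀ q ∈ Icc 1 r, α q = dVal d (c q) (s + 1) := fun q hq => (hc q hq).1
  rw [sum_congr rfl fun q _ => prod_span_X_pow_pow d s (i q) (c q), sum_monomialIdeal]
  refine le_antisymm (sInf_le ⟨isDFixed_monomialIdeal (IsDFixedGens.biUnion fun q hq =>
    isDFixedGens_dExponents (hd0 ▸ Nat.one_pos) hdvd (hc q hq).2), ?_⟩)
    (le_sInf fun J ⟨hJ, hgens⟩ => ?_)
  · rintro _ ⟨q, hq, l, hl, rfl⟩
    rw [SetLike.mem_coe, X_pow_eq_monomial, monomial_mem_monomialIdeal, hα q hq]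
    exact ⟨_, Set.mem_biUnion hq (single_mem_dExponents (by omega)), le_rfl⟩
  · rw [monomialIdeal, Ideal.span_le]
    rintro _ ⟨u, hu, rfl⟩
    obtain ⟨q, hq, hu⟩ := Set.mem_iUnion₂.1 hu
    have hq' := hbounds q hq
    let l₀ : Fin n := ⟨i q - 1, by omega⟩
    have hl₀ : (l₀ : ℕ) + 1 = i q := by simp only [l₀]; omega
    refine monomial_mem_of_mem_dExponents hJ (hc q hq).2 hl₀ ?_ hu
    rw [← hα q hq, ← X_pow_eq_monomial]
    exact hgens ⟨q, hq, l₀, hl₀, rfl⟩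

/-- Proposition: for `1 ≤ i_1 < ⋯ < i_r = n` and `α_1 < ⋯ < α_r` positive with
`d`-decompositions `α_q = Σ_t α_{qt} d_t` (here `c q t = α_{qt}`; indices are 1-based
and the variable `x_j` is `X l` with `l + 1 = j`),
`⟨x_{i_1}^{α_1},…,x_{i_r}^{α_r}⟩_d = Σ_{q=1}^r ∏_{t=0}^s (x_1^{d_t},…,x_{i_q}^{d_t})^{α_{qt}}`. -/
theorem dfixed_span_powers_of_variables {n : ℕ} (hn : 2 ≤ n) {K : Type*} [Field K]
    (s : ℕ) (d : ℕ → ℕ) (hd0 : d 0 = 1)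
    (hdvd : ∀ t < s, d t ∣ d (t + 1)) (hdlt : ∀ t < s, d t < d (t + 1))
    (r : ℕ) (hr : 1 ≤ r) (i α : ℕ → ℕ)
    (hi1 : 1 ≤ i 1) (hin : i r = n) (himono : StrictMonoOn i (Set.Icc 1 r))
    (hα1 : 1 ≤ α 1) (hαmono : StrictMonoOn α (Set.Icc 1 r))
    (c : ℕ → ℕ → ℕ) (hc : ∀ q ∈ Finset.Icc 1 r, IsDDecomp d s (α q) (c q)) :
    dFixedSpan d s {g : MvPolynomial (Fin n) K |
        ∃ q ∈ Finset.Icc 1 r, ∃ l : Fin n, (l : ℕ) + 1 = i q ∧ g = X l ^ α q} =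
      ∑ q ∈ Finset.Icc 1 r, ∏ t ∈ Finset.range (s + 1),
        (Ideal.span {g : MvPolynomial (Fin n) K |
          ∃ l : Fin n, (l : ℕ) < i q ∧ g = X l ^ d t}) ^ c q t :=
  dfixed_span_powers_of_variables_general s d hd0 hdvd r i α hi1 hin himono c hc
end

section
/- Let n ≥ 2, 1 ≤ i_1 < ⋯ < i_r = n integers, α_1 < ⋯ < α_r positive integers with d-decompositions α_q = Σ_t α_{qt} d_t, and set I_q = ∏_{t=0}^{s} ((x_1^{d_t},…,x_{i_q}^{d_t}))^{α_{qt}}. With m_q = (x_1,…,x_{i_q}) and n_q = (x_{i_{q−1}+1},…,x_{i_q}) (where i_0 = 0), for every 1 ≤ q ≤ r the following chain holds: (I_q : m_q) + (I_1 + ⋯ + I_q) ⊆ ((I_1 + ⋯ + I_q) : m_q) ⊆ ((I_1 + ⋯ + I_q) : n_q) = (I_q : n_q) + (I_1 + ⋯ + I_q). -/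
/-!
The first two inclusions are formal. For the equality, write `T = I_1 + ⋯ + I_q` and split
`p ∈ (T : n_q)` into the terms whose monomials lie in `T` and the rest `p'`. A monomial `m` of
`p'` satisfies `m x_l ∈ T` for every variable `x_l` of `n_q`, so some generator `u` of some `I_e`
divides `m x_l` but not `m`. For `e < q`, `u` involves only `x_1, …, x_{i_{q-1}}`, none of which
is `x_l`, so `u` would divide `m`; hence `u` is a generator of `I_q`, and `p' ∈ (I_q : n_q)`.
-/

open MvPolynomial

theorem Finsupp.le_of_le_add_single {σ : Type*} {u m : σ →₀ ℕ} {l : σ} {k : ℕ}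
    (hu : u l = 0) (h : u ≤ m + Finsupp.single l k) : u ≤ m := fun j => by
  by_cases hj : j = l
  · subst hj
    simp [hu]
  · simpa [Finsupp.single_apply, Ne.symm hj] using h j

theorem Ideal.add_colon_le_colon_sum {A ι : Type*} [CommSemiring A] {F : Finset ι}
    {I : ι → Ideal A} {q : ι} (hq : q ∈ F) (P : Set A) :
    (I q).colon P + ∑ e ∈ F, I e ≤ (∑ e ∈ F, I e).colon P :=
  sup_le (Submodule.colon_mono (Finset.single_le_sum (fun _ _ => bot_le) hq) subset_rfl)
    Ideal.le_colon

namespace MvPolynomial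

open scoped Pointwise

variable {σ R : Type*} [CommSemiring R]

variable (R) in
noncomputable def monomialSpan (A : Set (σ →₀ ℕ)) : Ideal (MvPolynomial σ R) :=
  Ideal.span ((fun a => monomial a 1) '' A)

theorem mem_monomialSpan {A : Set (σ →₀ ℕ)} {p : MvPolynomial σ R} :
    p ∈ monomialSpan R A ↔ ∀ m ∈ p.support, ∃ a ∈ A, a ≤ m :=
  mem_ideal_span_monomial_image

theorem monomial_mem_monomialSpan {A : Set (σ →₀ ℕ)} {a m : σ →₀ ℕ} (ha : a ∈ A) (ham : a ≤ m)
    (c : R) : monomial m c ∈ monomialSpan R A := by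
  rw [← tsub_add_cancel_of_le ham, ← mul_one c, ← monomial_mul]
  exact Ideal.mul_mem_left _ _ (Ideal.subset_span ⟨a, ha, rfl⟩)

theorem monomialSpan_empty : monomialSpan R (∅ : Set (σ →₀ ℕ)) = ⊥ := by
  simp [monomialSpan]

theorem monomialSpan_singleton_zero : monomialSpan R ({0} : Set (σ →₀ ℕ)) = ⊤ := by
  simp [monomialSpan]

theorem monomialSpan_union (A B : Set (σ →₀ ℕ)) :
    monomialSpan R (A ∪ B) = monomialSpan R A ⊔ monomialSpan R B := by
  simp only [monomialSpan, Set.image_union, Ideal.span_union]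

theorem monomialSpan_add (A B : Set (σ →₀ ℕ)) :
    monomialSpan R (A + B) = monomialSpan R A * monomialSpan R B := by
  rw [monomialSpan, monomialSpan, monomialSpan, Ideal.span_mul_span']
  congr 1
  ext f
  simp only [Set.mem_mul, Set.mem_image, Set.mem_add]
  constructor
  · rintro ⟨-, ⟨a, ha, b, hb, rfl⟩, rfl⟩
    exact ⟨_, ⟨a, ha, rfl⟩, _, ⟨b, hb, rfl⟩, by rw [monomial_mul, one_mul]⟩
  · rintro ⟨-, ⟨a, ha, rfl⟩, -, ⟨b, hb, rfl⟩, rfl⟩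
    exact ⟨a + b, ⟨a, ha, b, hb, rfl⟩, by rw [monomial_mul, one_mul]⟩

theorem exists_le_add_single_of_mul_X_mem_monomialSpan {A : Set (σ →₀ ℕ)}
    {p : MvPolynomial σ R} {l : σ} (h : p * X l ∈ monomialSpan R A) {m : σ →₀ ℕ}
    (hm : m ∈ p.support) : ∃ a ∈ A, a ≤ m + Finsupp.single l 1 :=
  mem_monomialSpan.mp h _ (by rwa [mem_support_iff, coeff_mul_X, ← mem_support_iff])

def IsMonomialIdealIn (S : Set σ) (I : Ideal (MvPolynomial σ R)) : Prop :=
  ∃ A : Set (σ →₀ ℕ), (∀ a ∈ A, ↑a.support ⊆ S) ∧ I = monomialSpan R A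

namespace IsMonomialIdealIn

variable {S : Set σ} {I J : Ideal (MvPolynomial σ R)}

theorem bot : IsMonomialIdealIn S (⊥ : Ideal (MvPolynomial σ R)) :=
  ⟨∅, by simp, monomialSpan_empty.symm⟩

theorem one : IsMonomialIdealIn S (1 : Ideal (MvPolynomial σ R)) :=
  ⟨{0}, by simp, by rw [monomialSpan_singleton_zero, Ideal.one_eq_top]⟩

theorem mono {S' : Set σ} (hI : IsMonomialIdealIn S I) (h : S ⊆ S') : IsMonomialIdealIn S' I :=
  let ⟨A, hA, hIA⟩ := hI
  ⟨A, fun a ha => (hA a ha).trans h, hIA⟩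

theorem sup (hI : IsMonomialIdealIn S I) (hJ : IsMonomialIdealIn S J) :
    IsMonomialIdealIn S (I ⊔ J) := by
  obtain ⟨A, hA, rfl⟩ := hI
  obtain ⟨B, hB, rfl⟩ := hJ
  exact ⟨A ∪ B, by simpa [or_imp, forall_and] using ⟨hA, hB⟩, (monomialSpan_union A B).symm⟩

theorem mul (hI : IsMonomialIdealIn S I) (hJ : IsMonomialIdealIn S J) :
    IsMonomialIdealIn S (I * J) := by
  classical
  obtain ⟨A, hA, rfl⟩ := hI
  obtain ⟨B, hB, rfl⟩ := hJ
  refine ⟨A + B, ?_, (monomialSpan_add A B).symm⟩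
  rintro _ ⟨a, ha, b, hb, rfl⟩
  exact (Finset.coe_subset.mpr Finsupp.support_add).trans
    (by simpa using Set.union_subset (hA a ha) (hB b hb))

theorem pow (hI : IsMonomialIdealIn S I) (k : ℕ) : IsMonomialIdealIn S (I ^ k) := by
  induction k with
  | zero => exact pow_zero I ▸ one
  | succ k ih => exact pow_succ I k ▸ ih.mul hI

end IsMonomialIdealIn

theorem isMonomialIdealIn_prod {ι : Type*} {S : Set σ} {F : Finset ι}
    {I : ι → Ideal (MvPolynomial σ R)} (hI : ∀ e ∈ F, IsMonomialIdealIn S (I e)) :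
    IsMonomialIdealIn S (∏ e ∈ F, I e) :=
  Finset.prod_induction _ _ (fun _ _ => IsMonomialIdealIn.mul) IsMonomialIdealIn.one hI

theorem isMonomialIdealIn_sum {ι : Type*} {S : Set σ} {F : Finset ι}
    {I : ι → Ideal (MvPolynomial σ R)} (hI : ∀ e ∈ F, IsMonomialIdealIn S (I e)) :
    IsMonomialIdealIn S (∑ e ∈ F, I e) :=
  Finset.sum_induction _ _ (fun _ _ => IsMonomialIdealIn.sup) IsMonomialIdealIn.bot hI

theorem isMonomialIdealIn_span_X_pow (S : Set σ) (D : ℕ) :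
    IsMonomialIdealIn S (Ideal.span {g : MvPolynomial σ R | ∃ l ∈ S, g = X l ^ D}) := by
  refine ⟨(fun l => Finsupp.single l D) '' S, ?_, ?_⟩
  · rintro _ ⟨l, hl, rfl⟩
    exact (Finset.coe_subset.mpr Finsupp.support_single_subset).trans (by simpa using hl)
  · rw [monomialSpan, Set.image_image]
    congr 1
    ext g
    simp [X_pow_eq_monomial, eq_comm]

theorem colon_sup_le {S : Set σ} {I J : Ideal (MvPolynomial σ R)}
    (hI : IsMonomialIdealIn Set.univ I) (hJ : IsMonomialIdealIn S J)
    {G : Set (MvPolynomial σ R)} (hG : G ⊆ X '' Sᶜ) :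
    (I ⊔ J).colon (Ideal.span G) ≤ I.colon (Ideal.span G) ⊔ (I ⊔ J) := by
  classical
  obtain ⟨V, -, rfl⟩ := hI
  obtain ⟨W, hW, rfl⟩ := hJ
  rw [← monomialSpan_union, Ideal.colon_span, Ideal.colon_span]
  intro p hp
  set D : (σ →₀ ℕ) → Prop := fun m => ∃ u ∈ V ∪ W, u ≤ m
  rw [← support_sum_monomial_coeff p, ← Finset.sum_filter_not_add_sum_filter p.support D]
  refine Submodule.add_mem_sup (Submodule.mem_colon.mpr fun g hg => ?_)
    (Ideal.sum_mem _ fun m hm => ?_)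
  · obtain ⟨l, hl, rfl⟩ := hG hg
    rw [smul_eq_mul, Finset.sum_mul]
    refine Ideal.sum_mem _ fun m hm => ?_
    obtain ⟨hmp, hmD⟩ := Finset.mem_filter.mp hm
    rw [← pow_one (X l), ← monomial_add_single]
    obtain ⟨u, hu | hu, hum⟩ :=
      exists_le_add_single_of_mul_X_mem_monomialSpan (Submodule.mem_colon.mp hp _ hg) hmp
    · exact monomial_mem_monomialSpan hu hum _
    · have hul : u l = 0 := Finsupp.notMem_support_iff.mp fun h => hl (hW u hu h)
      exact absurd ⟨u, Or.inr hu, Finsupp.le_of_le_add_single hul hum⟩ hmD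
  · obtain ⟨u, hu, hum⟩ := (Finset.mem_filter.mp hm).2
    exact monomial_mem_monomialSpan hu hum _

theorem colon_sum_eq {ι : Type*} [DecidableEq ι] {F : Finset ι} {q : ι} (hq : q ∈ F)
    {S : Set σ} {I : ι → Ideal (MvPolynomial σ R)} (hIq : IsMonomialIdealIn Set.univ (I q))
    (hI : ∀ e ∈ F.erase q, IsMonomialIdealIn S (I e))
    {G : Set (MvPolynomial σ R)} (hG : G ⊆ X '' Sᶜ) :
    (∑ e ∈ F, I e).colon (Ideal.span G) = (I q).colon (Ideal.span G) + ∑ e ∈ F, I e := by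
  refine le_antisymm ?_ (Ideal.add_colon_le_colon_sum hq _)
  rw [← Finset.add_sum_erase F I hq]
  exact colon_sup_le hIq (isMonomialIdealIn_sum hI) hG

end MvPolynomial

-- Variables are numbered from `0`: `x_j` is `X l` with `l + 1 = j`.
theorem colon_chain_general {n : ℕ} {K : Type*} [Field K]
    (s : ℕ) (d : ℕ → ℕ)
    (r : ℕ) (i : ℕ → ℕ)
    (himono : StrictMonoOn i (Set.Icc 1 r))
    (c : ℕ → ℕ → ℕ)
    (q : ℕ) (hq : q ∈ Finset.Icc 1 r) :
    letI Iq : ℕ → Ideal (MvPolynomial (Fin n) K) := fun e =>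
      ∏ t ∈ Finset.range (s + 1),
        (Ideal.span {g : MvPolynomial (Fin n) K |
          ∃ l : Fin n, (l : ℕ) < i e ∧ g = X l ^ d t}) ^ c e t
    letI mq : Ideal (MvPolynomial (Fin n) K) :=
      Ideal.span {g : MvPolynomial (Fin n) K | ∃ l : Fin n, (l : ℕ) < i q ∧ g = X l}
    letI nq : Ideal (MvPolynomial (Fin n) K) :=
      Ideal.span {g : MvPolynomial (Fin n) K |
        ∃ l : Fin n, i (q - 1) < (l : ℕ) + 1 ∧ (l : ℕ) + 1 ≤ i q ∧ g = X l}
    letI T : Ideal (MvPolynomial (Fin n) K) := ∑ e ∈ Finset.Icc 1 q, Iq e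
    Submodule.colon (Iq q) mq + T ≤ Submodule.colon T mq ∧
      Submodule.colon T mq ≤ Submodule.colon T nq ∧
      Submodule.colon T nq = Submodule.colon (Iq q) nq + T := by
  obtain ⟨hq1, hqr⟩ := Finset.mem_Icc.mp hq
  have hqq : q ∈ Finset.Icc 1 q := Finset.mem_Icc.mpr ⟨hq1, le_rfl⟩
  set Iq : ℕ → Ideal (MvPolynomial (Fin n) K) := fun e => ∏ t ∈ Finset.range (s + 1),
    (Ideal.span {g : MvPolynomial (Fin n) K | ∃ l : Fin n, (l : ℕ) < i e ∧ g = X l ^ d t}) ^ c e t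
  have hIq (e : ℕ) : IsMonomialIdealIn {l : Fin n | (l : ℕ) < i e} (Iq e) :=
    isMonomialIdealIn_prod fun t _ => (isMonomialIdealIn_span_X_pow _ (d t)).pow (c e t)
  have hearlier : ∀ e ∈ (Finset.Icc 1 q).erase q,
      IsMonomialIdealIn {l : Fin n | (l : ℕ) < i (q - 1)} (Iq e) := by
    intro e he
    obtain ⟨hne, he⟩ := Finset.mem_erase.mp he
    obtain ⟨he1, heq⟩ := Finset.mem_Icc.mp he
    exact (hIq e).mono fun l (hl : (l : ℕ) < i e) =>
      hl.trans_le (himono.monotoneOn ⟨he1, by omega⟩ ⟨by omega, by omega⟩ (by omega))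
  refine ⟨Ideal.add_colon_le_colon_sum hqq _,
    Submodule.colon_mono le_rfl (Ideal.span_mono fun _ ⟨l, _, hl, hg⟩ => ⟨l, hl, hg⟩),
    colon_sum_eq hqq ((hIq q).mono (Set.subset_univ _)) hearlier ?_⟩
  rintro _ ⟨l, hl, -, rfl⟩
  exact ⟨l, by simpa using hl, rfl⟩

/-- Proposition 2.6: with `I_q = ∏_{t=0}^s (x_1^{d_t},…,x_{i_q}^{d_t})^{α_{qt}}`
(`c q t = α_{qt}` the `d`-decomposition of `α_q`), `m_q = (x_1,…,x_{i_q})` and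
`n_q = (x_{i_{q−1}+1},…,x_{i_q})` (with `i_0 = 0`; indices 1-based, `x_j = X l` with
`l + 1 = j`), for every `1 ≤ q ≤ r` the chain
`(I_q : m_q) + (I_1+⋯+I_q) ⊆ ((I_1+⋯+I_q) : m_q) ⊆ ((I_1+⋯+I_q) : n_q)
  = (I_q : n_q) + (I_1+⋯+I_q)` holds. -/
theorem colon_chain {n : ℕ} (hn : 2 ≤ n) {K : Type*} [Field K]
    (s : ℕ) (d : ℕ → ℕ) (hd0 : d 0 = 1)
    (hdvd : ∀ t < s, d t ∣ d (t + 1)) (hdlt : ∀ t < s, d t < d (t + 1))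
    (r : ℕ) (hr : 1 ≤ r) (i α : ℕ → ℕ)
    (hi0 : i 0 = 0) (hi1 : 1 ≤ i 1) (hin : i r = n)
    (himono : StrictMonoOn i (Set.Icc 1 r))
    (hα1 : 1 ≤ α 1) (hαmono : StrictMonoOn α (Set.Icc 1 r))
    (c : ℕ → ℕ → ℕ) (hc : ∀ q ∈ Finset.Icc 1 r, IsDDecomp d s (α q) (c q))
    (q : ℕ) (hq : q ∈ Finset.Icc 1 r) :
    letI Iq : ℕ → Ideal (MvPolynomial (Fin n) K) := fun e =>
      ∏ t ∈ Finset.range (s + 1),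
        (Ideal.span {g : MvPolynomial (Fin n) K |
          ∃ l : Fin n, (l : ℕ) < i e ∧ g = X l ^ d t}) ^ c e t
    letI mq : Ideal (MvPolynomial (Fin n) K) :=
      Ideal.span {g : MvPolynomial (Fin n) K | ∃ l : Fin n, (l : ℕ) < i q ∧ g = X l}
    letI nq : Ideal (MvPolynomial (Fin n) K) :=
      Ideal.span {g : MvPolynomial (Fin n) K |
        ∃ l : Fin n, i (q - 1) < (l : ℕ) + 1 ∧ (l : ℕ) + 1 ≤ i q ∧ g = X l}
    letI T : Ideal (MvPolynomial (Fin n) K) := ∑ e ∈ Finset.Icc 1 q, Iq e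
    Submodule.colon (Iq q) mq + T ≤ Submodule.colon T mq ∧
      Submodule.colon T mq ≤ Submodule.colon T nq ∧
      Submodule.colon T nq = Submodule.colon (Iq q) nq + T :=
  colon_chain_general s d r i himono c q hq
end
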